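/- Let q be a prime power and m ≥ 1. Then the Wenger graph W_m(q) is isomorphic (as a graph) to the bipartite graph W'_m(q), via the map sending a point (p_1, …, p_{m+1}) of W_m(q) to the point (p_1, p_2, p'_3, …, p'_{m+1}) of W'_m(q), where p'_k = p_k + ∑_{i=2}^{k−1} p_i · p_1^{k−i} for k = 3, …, m+1, and sending each line [l_1, …, l_{m+1}] to itself. -/

import Mathlib

open Finset

/-- Adjacency relation of the Wenger graph `W_m(q)`: a point `p = (p_1, …, p_{m+1})`
(0-indexed here) is adjacent to a line `l = (l_1, …, l_{m+1})` iff
`l_{i+1} + p_{i+1} = l_i * p_1` for `i = 1, …, m`. -/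
def wengerAdj {F : Type*} [Field F] {m : ℕ} (p l : Fin (m + 1) → F) : Prop :=
  ∀ i : Fin m, l i.succ + p i.succ = l i.castSucc * p 0

/-- The Wenger graph `W_m(q)` as a simple graph on `P ⊕ L`, where both `P` (points, `inl`)
and `L` (lines, `inr`) are copies of `F^{m+1}` for a finite field `F` with `q` elements. -/
def WengerGraph (F : Type*) [Field F] (m : ℕ) :
    SimpleGraph ((Fin (m + 1) → F) ⊕ (Fin (m + 1) → F)) where
  Adj x y :=
    match x, y with
    | Sum.inl p, Sum.inr l => wengerAdj p l
    | Sum.inr l, Sum.inl p => wengerAdj p l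
    | _, _ => False
  symm := by refine ⟨?_⟩; rintro (p | l) (p' | l') h <;> exact h
  loopless := by refine ⟨?_⟩; rintro (p | l) h <;> exact h

/-- Adjacency relation of the graph `W'_m(q)`: `p ~ l` iff
`l_k + p_k = l_1 * p_1^(k-1)` for `k = 2, …, m+1` (0-indexed below). -/
def wengerAdj' {F : Type*} [Field F] {m : ℕ} (p l : Fin (m + 1) → F) : Prop :=
  ∀ i : Fin m, l i.succ + p i.succ = l 0 * p 0 ^ ((i : ℕ) + 1)

/-- The graph `W'_m(q)` on the same partite sets as `W_m(q)`. -/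
def WengerGraph' (F : Type*) [Field F] (m : ℕ) :
    SimpleGraph ((Fin (m + 1) → F) ⊕ (Fin (m + 1) → F)) where
  Adj x y :=
    match x, y with
    | Sum.inl p, Sum.inr l => wengerAdj' p l
    | Sum.inr l, Sum.inl p => wengerAdj' p l
    | _, _ => False
  symm := by refine ⟨?_⟩; rintro (p | l) (p' | l') h <;> exact h
  loopless := by refine ⟨?_⟩; rintro (p | l) h <;> exact h

/-- The map `ω` on points: `p'_k = p_k + ∑_{i=2}^{k-1} p_i * p_1^(k-i)` (1-indexed),
written 0-indexed as `p'_j = p_j + ∑_{1 ≤ i < j} p_i * p_0^(j-i)`. -/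
def omegaMap {F : Type*} [Field F] {m : ℕ} (p : Fin (m + 1) → F) : Fin (m + 1) → F :=
  fun j => p j + ∑ i : Fin (m + 1),
    if 1 ≤ (i : ℕ) ∧ (i : ℕ) < (j : ℕ) then p i * p 0 ^ ((j : ℕ) - (i : ℕ)) else 0

/-! Away from the first two coordinates `ω` satisfies `ω_{k+1} = p_{k+1} + ω_k p_1`, so it is
unitriangular with inverse `p_{k+1} = ω_{k+1} - ω_k ω_1`. The same recurrence shows that the defect
`l_{k+1} + ω_{k+1} - l_1 p_1^k` of an equation of `W'` is the defect `l_{k+1} + p_{k+1} - l_k p_1`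
of the corresponding equation of `W` plus `p_1` times the previous defect of `W'`, so the two
systems of equations have the same solutions. -/

section

variable {F : Type*} [Field F] {m : ℕ}

@[simp] lemma omegaMap_zero (p : Fin (m + 1) → F) : omegaMap p 0 = p 0 := by
  simp [omegaMap]

lemma omegaMap_one (p : Fin (m + 1) → F) (h : 1 < m + 1) : omegaMap p ⟨1, h⟩ = p ⟨1, h⟩ := by
  simp only [omegaMap, add_eq_left]
  exact sum_eq_zero fun i _ => if_neg (by omega)

lemma omegaMap_succ_succ (p : Fin (m + 1) → F) (k : ℕ) (hk : k + 2 < m + 1) :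
    omegaMap p ⟨k + 2, hk⟩ = p ⟨k + 2, hk⟩ + omegaMap p ⟨k + 1, by omega⟩ * p 0 := by
  have hterm : ∀ i : Fin (m + 1),
      (if 1 ≤ (i : ℕ) ∧ (i : ℕ) < k + 2 then p i * p 0 ^ (k + 2 - i) else 0) =
        (if i = ⟨k + 1, by omega⟩ then p i * p 0 else 0) +
          (if 1 ≤ (i : ℕ) ∧ (i : ℕ) < k + 1 then p i * p 0 ^ (k + 1 - i) else 0) * p 0 := by
    intro i
    by_cases hi : (i : ℕ) = k + 1
    · rw [if_pos (Fin.ext hi), if_pos (by omega), if_neg (by omega), hi]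
      simp
    · have hi' : i ≠ ⟨k + 1, by omega⟩ := Fin.ne_of_val_ne hi
      have hcond : 1 ≤ (i : ℕ) ∧ (i : ℕ) < k + 2 ↔ 1 ≤ (i : ℕ) ∧ (i : ℕ) < k + 1 := by omega
      simp only [if_neg hi', zero_add, hcond]
      split_ifs with h
      · rw [mul_assoc, ← pow_succ, show k + 1 - (i : ℕ) + 1 = k + 2 - i by omega]
      · rw [zero_mul]
  simp only [omegaMap, hterm, sum_add_distrib, sum_ite_eq', mem_univ, if_true, ← sum_mul]
  ring

/-- The recurrence `omegaMap_succ_succ` solved for `p`. -/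
def omegaMapInv (w : Fin (m + 1) → F) : Fin (m + 1) → F :=
  fun j => if 2 ≤ (j : ℕ) then w j - w ⟨j - 1, by omega⟩ * w 0 else w j

lemma omegaMapInv_omegaMap (p : Fin (m + 1) → F) : omegaMapInv (omegaMap p) = p := by
  funext ⟨j, hj⟩
  match j, hj with
  | 0, _ => simp [omegaMapInv]
  | 1, _ => simp [omegaMapInv, omegaMap_one]
  | k + 2, hk => simp [omegaMapInv, omegaMap_succ_succ p k hk]

lemma omegaMap_omegaMapInv (w : Fin (m + 1) → F) : omegaMap (omegaMapInv w) = w := by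
  funext ⟨j, hj⟩
  induction j with
  | zero => simp [omegaMapInv]
  | succ k ih =>
    rcases k with _ | k
    · simp [omegaMap_one, omegaMapInv]
    · rw [omegaMap_succ_succ, ih]
      simp [omegaMapInv]

def omegaEquiv : (Fin (m + 1) → F) ≃ (Fin (m + 1) → F) where
  toFun := omegaMap
  invFun := omegaMapInv
  left_inv := omegaMapInv_omegaMap
  right_inv := omegaMap_omegaMapInv

lemma wengerAdj_iff_forall_nat {p l : Fin (m + 1) → F} :
    wengerAdj p l ↔
      ∀ k (hk : k + 1 < m + 1), l ⟨k + 1, hk⟩ + p ⟨k + 1, hk⟩ = l ⟨k, by omega⟩ * p 0 :=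
  ⟨fun h k hk => h ⟨k, by omega⟩, fun h i => h i i.succ.isLt⟩

lemma wengerAdj'_iff_forall_nat {p l : Fin (m + 1) → F} :
    wengerAdj' p l ↔
      ∀ k (hk : k + 1 < m + 1), l ⟨k + 1, hk⟩ + p ⟨k + 1, hk⟩ = l 0 * p 0 ^ (k + 1) :=
  ⟨fun h k hk => h ⟨k, by omega⟩, fun h i => h i i.succ.isLt⟩

lemma wengerAdj_iff_wengerAdj'_omegaMap (p l : Fin (m + 1) → F) :
    wengerAdj p l ↔ wengerAdj' (omegaMap p) l := by
  rw [wengerAdj_iff_forall_nat, wengerAdj'_iff_forall_nat, omegaMap_zero]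
  constructor
  · intro h k hk
    induction k with
    | zero => simpa [omegaMap_one] using h 0 hk
    | succ k ih =>
      rw [omegaMap_succ_succ]
      linear_combination h (k + 1) hk + p 0 * ih (by omega)
  · intro h k hk
    rcases k with _ | k
    · simpa [omegaMap_one] using h 0 hk
    · have hrec := omegaMap_succ_succ p k hk
      linear_combination h (k + 1) hk - p 0 * h k (by omega) - hrec

end

def wengerIso (F : Type*) [Field F] (m : ℕ) : WengerGraph F m ≃g WengerGraph' F m where
  toEquiv := Equiv.sumCongr omegaEquiv (Equiv.refl _)
  map_rel_iff' := by
    rintro (p | l) (p' | l')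
    exacts [Iff.rfl, (wengerAdj_iff_wengerAdj'_omegaMap p l').symm,
      (wengerAdj_iff_wengerAdj'_omegaMap p' l).symm, Iff.rfl]

theorem wenger_iso_wenger'_general (m : ℕ) (F : Type) [Field F] :
    ∃ e : WengerGraph F m ≃g WengerGraph' F m,
      (∀ p : Fin (m + 1) → F, e (Sum.inl p) = Sum.inl (omegaMap p)) ∧
      (∀ l : Fin (m + 1) → F, e (Sum.inr l) = Sum.inr l) :=
  ⟨wengerIso F m, fun _ => rfl, fun _ => rfl⟩

/-- The map `ω`, acting by `omegaMap` on points and by the identity on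
lines, is an isomorphism from `W_m(q)` to `W'_m(q)`. -/
theorem wenger_iso_wenger' (q m : ℕ) (hm : 1 ≤ m) (F : Type) [Field F] [Fintype F]
    (hq : Fintype.card F = q) :
    ∃ e : WengerGraph F m ≃g WengerGraph' F m,
      (∀ p : Fin (m + 1) → F, e (Sum.inl p) = Sum.inl (omegaMap p)) ∧
      (∀ l : Fin (m + 1) → F, e (Sum.inr l) = Sum.inr l) :=
  wenger_iso_wenger'_general m F
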